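/- arXiv:2402.06926 — 2 statements merged into one kernel-verified Lean document; each statement's English description precedes it below -/
import Mathlib

section
/- For every real α > 0 and all x, y ≥ 0, one has (x - y)(x^α - y^α) ≥ (4α/(α+1)^2) · (x^((α+1)/2) - y^((α+1)/2))^2. -/
/-!
With `β = (α + 1) / 2` one has `x ^ β - y ^ β = β ∫_y^x t ^ (β - 1) dt` and
`x ^ α - y ^ α = α ∫_y^x (t ^ (β - 1)) ^ 2 dt`, so for `y ≤ x` the inequality is the
Cauchy–Schwarz inequality `(∫_y^x g)² ≤ (x - y) ∫_y^x g²` for `g t = t ^ (β - 1)`.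
-/

open intervalIntegral
open MeasureTheory (volume)

theorem sq_intervalIntegral_le_mul_intervalIntegral_sq {f : ℝ → ℝ} {a b : ℝ} (hab : a ≤ b)
    (hf : IntervalIntegrable f volume a b)
    (hf2 : IntervalIntegrable (fun t ↦ f t ^ 2) volume a b) :
    (∫ t in a..b, f t) ^ 2 ≤ (b - a) * ∫ t in a..b, f t ^ 2 := by
  have hquad : ∀ c : ℝ,
      0 ≤ (b - a) * (c * c) + (-2 * ∫ t in a..b, f t) * c + ∫ t in a..b, f t ^ 2 := by
    intro c
    have hexpand : ∫ t in a..b, (f t - c) ^ 2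
        = (∫ t in a..b, f t ^ 2) - 2 * c * (∫ t in a..b, f t) + (b - a) * c ^ 2 := by
      simp_rw [sub_sq]
      rw [integral_add (hf2.sub (hf.const_mul _ |>.mul_const _)) intervalIntegrable_const,
        integral_sub hf2 (hf.const_mul _ |>.mul_const _), integral_mul_const, integral_const_mul,
        integral_const, smul_eq_mul]
      ring
    have hnonneg : 0 ≤ ∫ t in a..b, (f t - c) ^ 2 :=
      integral_nonneg hab fun t _ ↦ sq_nonneg (f t - c)
    linarith
  have hdiscrim := discrim_le_zero hquad
  rw [discrim] at hdiscrim
  linarith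

theorem four_mul_sq_rpow_sub_rpow_le {α x y : ℝ} (hα : 0 < α) (hy : 0 ≤ y) (hyx : y ≤ x) :
    4 * α * (x ^ ((α + 1) / 2) - y ^ ((α + 1) / 2)) ^ 2
      ≤ (α + 1) ^ 2 * ((x - y) * (x ^ α - y ^ α)) := by
  have he : -1 < (α - 1) / 2 := by linarith
  have hsq : Set.EqOn (fun t : ℝ ↦ (t ^ ((α - 1) / 2)) ^ 2) (fun t ↦ t ^ (α - 1))
      (Set.uIcc y x) := by
    intro t ht
    rw [Set.uIcc_of_le hyx] at ht
    simp only [← Real.rpow_mul_natCast (hy.trans ht.1)]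
    ring_nf
  have hCS := sq_intervalIntegral_le_mul_intervalIntegral_sq hyx (intervalIntegrable_rpow' he)
    ((intervalIntegrable_rpow' (r := α - 1) (by linarith)).congr
      (hsq.symm.mono Set.uIoc_subset_uIcc))
  rw [integral_congr hsq, integral_rpow (Or.inl he), integral_rpow (Or.inl (by linarith))] at hCS
  have hexp : (α - 1) / 2 + 1 = (α + 1) / 2 := by ring
  rw [hexp, sub_add_cancel, div_pow, div_le_iff₀ (by positivity)] at hCS
  calc 4 * α * (x ^ ((α + 1) / 2) - y ^ ((α + 1) / 2)) ^ 2
      ≤ 4 * α * ((x - y) * ((x ^ α - y ^ α) / α) * ((α + 1) / 2) ^ 2) := by gcongr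
    _ = (α + 1) ^ 2 * ((x - y) * (x ^ α - y ^ α)) := by field_simp; ring

theorem algebraic_ineq_i (α x y : ℝ) (hα : 0 < α) (hx : 0 ≤ x) (hy : 0 ≤ y) :
    (x - y) * (x ^ α - y ^ α) ≥
      (4 * α / (α + 1) ^ 2) * (x ^ ((α + 1) / 2) - y ^ ((α + 1) / 2)) ^ 2 := by
  wlog hyx : y ≤ x generalizing x y
  · convert this y x hy hx (le_of_not_ge hyx) using 1 <;> ring
  rw [ge_iff_le, div_mul_eq_mul_div, div_le_iff₀ (by positivity), mul_comm _ ((α + 1) ^ 2)]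
  exact four_mul_sq_rpow_sub_rpow_le hα hy hyx
end

section
/- For every real α with 0 < α ≤ 1 and all x, y ≥ 0 with x ≠ y, one has (x - y)/(x^α - y^α) ≤ (1/α)(x^(1-α) + y^(1-α)). -/
/-! Weighted AM–GM gives `y ^ α * x ^ (1 - α) ≤ α * y + (1 - α) * x`, i.e.
`α * (x - y) ≤ x ^ (1 - α) * (x ^ α - y ^ α)`. For `y < x` dividing by `x ^ α - y ^ α > 0`
bounds the quotient by `x ^ (1 - α) / α`; the quotient is symmetric in `x` and `y`. -/

theorem mul_sub_le_rpow_mul_rpow_sub {α x y : ℝ} (hα0 : 0 ≤ α) (hα1 : α ≤ 1)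
    (hx : 0 ≤ x) (hy : 0 ≤ y) :
    α * (x - y) ≤ x ^ (1 - α) * (x ^ α - y ^ α) := by
  have amgm : y ^ α * x ^ (1 - α) ≤ α * y + (1 - α) * x :=
    Real.geom_mean_le_arith_mean2_weighted hα0 (sub_nonneg.2 hα1) hy hx (by ring)
  have hxx : x ^ (1 - α) * x ^ α = x := by
    rw [← Real.rpow_add' hx (by norm_num), sub_add_cancel, Real.rpow_one]
  linarith

theorem div_rpow_sub_rpow_le {α x y : ℝ} (hα0 : 0 < α) (hα1 : α ≤ 1)
    (hy : 0 ≤ y) (hyx : y < x) :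
    (x - y) / (x ^ α - y ^ α) ≤ 1 / α * x ^ (1 - α) := by
  have hpos : 0 < x ^ α - y ^ α := sub_pos.2 (Real.rpow_lt_rpow hy hyx hα0)
  rw [div_le_iff₀ hpos, one_div_mul_eq_div, div_mul_eq_mul_div, le_div_iff₀' hα0]
  exact mul_sub_le_rpow_mul_rpow_sub hα0.le hα1 (hy.trans hyx.le) hy

theorem algebraic_ineq_ii (α x y : ℝ) (hα0 : 0 < α) (hα1 : α ≤ 1)
    (hx : 0 ≤ x) (hy : 0 ≤ y) (hxy : x ≠ y) :
    (x - y) / (x ^ α - y ^ α) ≤ (1 / α) * (x ^ (1 - α) + y ^ (1 - α)) := by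
  wlog hyx : y < x generalizing x y
  · have hswap : (x - y) / (x ^ α - y ^ α) = (y - x) / (y ^ α - x ^ α) := by
      rw [← neg_sub y x, ← neg_sub (y ^ α) (x ^ α), neg_div_neg_eq]
    rw [hswap, add_comm]
    exact this y x hy hx hxy.symm (lt_of_le_of_ne (not_lt.1 hyx) hxy)
  calc (x - y) / (x ^ α - y ^ α) ≤ 1 / α * x ^ (1 - α) := div_rpow_sub_rpow_le hα0 hα1 hy hyx
    _ ≤ 1 / α * (x ^ (1 - α) + y ^ (1 - α)) := by
      gcongr
      exact le_add_of_nonneg_right (Real.rpow_nonneg hy _)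
end
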